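/- Let f be a function on images of the logistic-regression form f(s) = C · exp(Σ_{i ∈ P} a_i · s(i)) with C ≠ 0 chosen so that f is normalized, where a_i are real coefficients and s(i) ∈ {0,1} is the value of pixel i. Then for every bipartition P = A ⊔ B, the entanglement entropy of f vanishes: S(ρ^A) = 0. -/

import Mathlib

/-!
The exponential of a sum splits along the bipartition, so `f (s_A, s_B) = g s_A * h s_B` is a
product state. Its reduced density matrix is `‖h‖² • (conj g) gᵀ`, and normalization
`‖g‖² ‖h‖² = 1` makes this rank-one matrix a projection. A projection has eigenvalues `0` and
`1` only, and `negMulLog` vanishes at both.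
-/

/-- The von Neumann entropy of a Hermitian matrix:
`S(ρ) = ∑ k, negMulLog (λ_k)` where `λ_k` are the eigenvalues of `ρ`. -/
noncomputable def vonNeumannEntropy {n : Type*} [Fintype n] [DecidableEq n]
    {ρ : Matrix n n ℂ} (hρ : ρ.IsHermitian) : ℝ :=
  ∑ k, Real.negMulLog (hρ.eigenvalues k)

open Matrix ComplexConjugate

theorem Fintype.sum_sumArrow {A B α M : Type*} [Fintype A] [Fintype B] [DecidableEq A]
    [DecidableEq B] [Fintype α] [DecidableEq α] [AddCommMonoid M] (φ : (A ⊕ B → α) → M) :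
    ∑ s, φ s = ∑ sA, ∑ sB, φ (Sum.elim sA sB) := by
  rw [← Fintype.sum_prod_type']
  exact Fintype.sum_equiv (Equiv.sumArrowEquivProdArrow A B α) _ _ fun s => by
    simp [Equiv.sumArrowEquivProdArrow]

theorem isIdempotentElem_smul_vecMulVec {R n : Type*} [CommRing R] [Fintype n] {c : R}
    {u v : n → R} (h : c * (v ⬝ᵥ u) = 1) : IsIdempotentElem (c • vecMulVec u v) := by
  rw [IsIdempotentElem, smul_mul_smul_comm, vecMulVec_mul_vecMulVec]
  ext i j
  simp only [Matrix.smul_apply, vecMulVec_apply, Pi.smul_apply, smul_eq_mul]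
  linear_combination (c * u i * v j) * h

theorem Matrix.IsHermitian.eigenvalues_mem_zero_one {𝕜 n : Type*} [RCLike 𝕜] [Fintype n]
    [DecidableEq n] {ρ : Matrix n n 𝕜} (hρ : ρ.IsHermitian) (hidem : IsIdempotentElem ρ) (k : n) :
    hρ.eigenvalues k = 0 ∨ hρ.eigenvalues k = 1 :=
  hidem.spectrum_subset ℝ (hρ.eigenvalues_mem_spectrum_real k)

theorem vonNeumannEntropy_eq_zero_of_isIdempotentElem {n : Type*} [Fintype n] [DecidableEq n]
    {ρ : Matrix n n ℂ} (hρ : ρ.IsHermitian) (hidem : IsIdempotentElem ρ) :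
    vonNeumannEntropy hρ = 0 :=
  Finset.sum_eq_zero fun k _ => by
    rcases hρ.eigenvalues_mem_zero_one hidem k with h | h <;> simp [h, Real.negMulLog]

theorem star_dotProduct_self_eq_sum_norm_sq {n : Type*} [Fintype n] (v : n → ℂ) :
    star v ⬝ᵥ v = ((∑ x, ‖v x‖ ^ 2 : ℝ) : ℂ) := by
  push_cast
  exact Finset.sum_congr rfl fun x _ => Complex.conj_mul' (v x)

section ReducedDensityMatrix

variable {X Y : Type*} [Fintype Y]

def reducedDensityMatrix (F : Matrix X Y ℂ) : Matrix X X ℂ :=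
  of fun x x' => ∑ y, conj (F x y) * F x' y

theorem reducedDensityMatrix_vecMulVec (g : X → ℂ) (h : Y → ℂ) :
    reducedDensityMatrix (vecMulVec g h) = (star h ⬝ᵥ h) • vecMulVec (star g) g := by
  ext x x'
  simp only [reducedDensityMatrix, of_apply, vecMulVec_apply, Matrix.smul_apply, smul_eq_mul,
    dotProduct, Finset.sum_mul, map_mul, Pi.star_apply, RCLike.star_def]
  exact Finset.sum_congr rfl fun y _ => by ring

theorem isIdempotentElem_reducedDensityMatrix_vecMulVec [Fintype X] {g : X → ℂ} {h : Y → ℂ}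
    (hnorm : ∑ x, ∑ y, ‖vecMulVec g h x y‖ ^ 2 = 1) :
    IsIdempotentElem (reducedDensityMatrix (vecMulVec g h)) := by
  have hprod : (∑ y, ‖h y‖ ^ 2) * (∑ x, ‖g x‖ ^ 2) = 1 := by
    simpa [vecMulVec_apply, mul_pow, Finset.sum_mul_sum, mul_comm] using hnorm
  rw [reducedDensityMatrix_vecMulVec]
  apply isIdempotentElem_smul_vecMulVec
  rw [dotProduct_comm g, star_dotProduct_self_eq_sum_norm_sq, star_dotProduct_self_eq_sum_norm_sq,
    ← Complex.ofReal_mul, hprod, Complex.ofReal_one]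

end ReducedDensityMatrix

noncomputable def logisticWeight {ι : Type*} [Fintype ι] (a : ι → ℝ) (s : ι → Bool) : ℂ :=
  Complex.exp (∑ i, (a i : ℂ) * if s i then 1 else 0)

theorem logisticWeight_sumElim {A B : Type*} [Fintype A] [Fintype B] (a : A ⊕ B → ℝ)
    (sA : A → Bool) (sB : B → Bool) :
    logisticWeight a (Sum.elim sA sB) =
      logisticWeight (a ∘ Sum.inl) sA * logisticWeight (a ∘ Sum.inr) sB := by
  simp only [logisticWeight, Fintype.sum_sum_type, Sum.elim_inl, Sum.elim_inr,
    Function.comp_apply, Complex.exp_add]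
  rfl

theorem logistic_regression_entropy_zero_general
    (A B : Type*) [Fintype A] [Fintype B] [DecidableEq A] [DecidableEq B]
    (f : (A ⊕ B → Bool) → ℂ) (a : A ⊕ B → ℝ) (C : ℂ)
    (hform : ∀ s, f s = C * Complex.exp (∑ i, (a i : ℂ) * (if s i then 1 else 0)))
    (hf : ∑ s, ‖f s‖ ^ 2 = 1)
    (ρA : Matrix (A → Bool) (A → Bool) ℂ)
    (hρA : ∀ sA s'A, ρA sA s'A =
      ∑ sB : B → Bool, (starRingEnd ℂ) (f (Sum.elim sA sB)) * f (Sum.elim s'A sB))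
    (hherm : ρA.IsHermitian) :
    vonNeumannEntropy hherm = 0 := by
  set F := vecMulVec (C • logisticWeight (a ∘ Sum.inl)) (logisticWeight (a ∘ Sum.inr))
  have hfF : ∀ sA sB, f (Sum.elim sA sB) = F sA sB := fun sA sB => by
    rw [hform, ← logisticWeight, logisticWeight_sumElim]
    exact (mul_assoc _ _ _).symm
  have hρF : ρA = reducedDensityMatrix F := by
    ext sA s'A
    simp only [hρA, hfF, reducedDensityMatrix, of_apply]
  have hnorm : ∑ sA, ∑ sB, ‖F sA sB‖ ^ 2 = 1 := by
    simpa only [Fintype.sum_sumArrow, hfF] using hf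
  exact vonNeumannEntropy_eq_zero_of_isIdempotentElem hherm
    (hρF ▸ isIdempotentElem_reducedDensityMatrix_vecMulVec hnorm)

/-- A normalized function of the logistic-regression form
`f s = C * exp (∑ i, a i * s i)` (with `C ≠ 0`, real coefficients `a i`, and
`s i ∈ {0,1}`) has vanishing entanglement entropy `S(ρ^A) = 0` for every
bipartition `P = A ⊔ B`. -/
theorem logistic_regression_entropy_zero
    (A B : Type*) [Fintype A] [Fintype B] [DecidableEq A] [DecidableEq B]
    (f : (A ⊕ B → Bool) → ℂ) (a : A ⊕ B → ℝ) (C : ℂ) (hC : C ≠ 0)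
    (hform : ∀ s, f s = C * Complex.exp (∑ i, (a i : ℂ) * (if s i then 1 else 0)))
    (hf : ∑ s, ‖f s‖ ^ 2 = 1)
    (ρA : Matrix (A → Bool) (A → Bool) ℂ)
    (hρA : ∀ sA s'A, ρA sA s'A =
      ∑ sB : B → Bool, (starRingEnd ℂ) (f (Sum.elim sA sB)) * f (Sum.elim s'A sB))
    (hherm : ρA.IsHermitian) :
    vonNeumannEntropy hherm = 0 :=
  logistic_regression_entropy_zero_general A B f a C hform hf ρA hρA hherm
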